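/- Let X and Y be Banach spaces and Z = X ⊕_∞ Y. Then (x, y) is a semi PC point of B_Z if and only if x is a semi PC point of B_X and y is a semi PC point of B_Y. -/

import Mathlib

/-!
If `U` is weakly open in `Z = X ⊕_∞ Y` and `(x₀, y₀) ∈ U ∩ B_Z`, the weakly continuous slice
`x' ↦ (x', y₀)` pulls `U` back to a weakly open set meeting `B_X` at `x₀`. The slice maps `B_X`
into `B_Z` and `‖x' - x‖ ≤ ‖(x', y₀) - (x, y)‖`, so the semi PC property passes to the factors.
Conversely, if `U` and `V` witness it for `x` and `y`, the preimage of `U × V` under the weakly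
continuous coordinate projections witnesses it for `(x, y)`, since the distance in `Z` is the
maximum of the coordinate distances.
-/

/-- The weak topology on a normed space `Z`. -/
noncomputable def weakTop (Z : Type*) [NormedAddCommGroup Z] [NormedSpace ℝ Z] :
    TopologicalSpace Z :=
  TopologicalSpace.induced (fun (z : Z) (f : Z →L[ℝ] ℝ) => f z) inferInstance

/-- A point `x₀` of the closed unit ball of `Z` is a *semi PC* of `B_Z` if for every `ε > 0`
there is a nonempty relatively weakly open subset of `B_Z` contained in `B(x₀, ε)`. -/
def IsSemiPCOfBall {Z : Type*} [NormedAddCommGroup Z] [NormedSpace ℝ Z] (x : Z) : Prop :=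
  ‖x‖ ≤ 1 ∧ ∀ ε > (0 : ℝ), ∃ U : Set Z, (weakTop Z).IsOpen U ∧
    (U ∩ {z : Z | ‖z‖ ≤ 1}).Nonempty ∧ U ∩ {z : Z | ‖z‖ ≤ 1} ⊆ Metric.closedBall x ε

open Topology

section Weak

variable {A B : Type*} [NormedAddCommGroup A] [NormedSpace ℝ A]
  [NormedAddCommGroup B] [NormedSpace ℝ B]

theorem continuous_weakTop_apply (g : A →L[ℝ] ℝ) : Continuous[weakTop A, _] g :=
  @Continuous.comp A ((A →L[ℝ] ℝ) → ℝ) ℝ (weakTop A) _ _ (fun a f => f a) (fun p => p g)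
    (continuous_apply g) continuous_induced_dom

theorem continuous_weakTop_rng_iff {α : Type*} {t : TopologicalSpace α} {f : α → B} :
    Continuous[t, weakTop B] f ↔ ∀ g : B →L[ℝ] ℝ, Continuous[t, _] fun a => g (f a) :=
  continuous_induced_rng.trans continuous_pi_iff

theorem continuous_weakTop_add_const (T : A →L[ℝ] B) (c : B) :
    Continuous[weakTop A, weakTop B] fun a => T a + c :=
  continuous_weakTop_rng_iff.2 fun g => by
    simpa using @Continuous.add_const ℝ _ _ _ A (weakTop A) _
      (continuous_weakTop_apply (g.comp T)) (g c)

end Weak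

section WithLp

open WithLp

variable {X Y : Type*} [NormedAddCommGroup X] [NormedSpace ℝ X]
  [NormedAddCommGroup Y] [NormedSpace ℝ Y] (p : ENNReal) [Fact (1 ≤ p)]

theorem continuous_weakTop_withLp_fst :
    Continuous[weakTop (WithLp p (X × Y)), weakTop X] WithLp.fst := by
  simpa using continuous_weakTop_add_const (fstL p ℝ X Y) 0

theorem continuous_weakTop_withLp_snd :
    Continuous[weakTop (WithLp p (X × Y)), weakTop Y] WithLp.snd := by
  simpa using continuous_weakTop_add_const (sndL p ℝ X Y) 0

theorem continuous_weakTop_toLp_mk_left (y : Y) :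
    Continuous[weakTop X, weakTop (WithLp p (X × Y))] fun x => toLp p (x, y) := by
  convert continuous_weakTop_add_const
    ((prodContinuousLinearEquiv p ℝ X Y).symm.toContinuousLinearMap ∘L .inl ℝ X Y)
    (toLp p (0, y)) using 2 with x
  simp [← toLp_add]

theorem continuous_weakTop_toLp_mk_right (x : X) :
    Continuous[weakTop Y, weakTop (WithLp p (X × Y))] fun y => toLp p (x, y) := by
  convert continuous_weakTop_add_const
    ((prodContinuousLinearEquiv p ℝ X Y).symm.toContinuousLinearMap ∘L .inr ℝ X Y)
    (toLp p (x, 0)) using 2 with y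
  simp [← toLp_add]

end WithLp

section Weak

variable {A B : Type*} [NormedAddCommGroup A] [NormedSpace ℝ A]
  [NormedAddCommGroup B] [NormedSpace ℝ B]

theorem IsSemiPCOfBall.of_pullback {a : A} {b : B} (hb : IsSemiPCOfBall b) (ha : ‖a‖ ≤ 1)
    (hpull : ∀ b', ‖b'‖ ≤ 1 → ∃ φ : A → B, Continuous[weakTop A, weakTop B] φ ∧
      (∃ a', ‖a'‖ ≤ 1 ∧ φ a' = b') ∧ ∀ a', ‖a'‖ ≤ 1 → ‖φ a'‖ ≤ 1 ∧ dist a' a ≤ dist (φ a') b) :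
    IsSemiPCOfBall a := by
  refine ⟨ha, fun ε hε => ?_⟩
  obtain ⟨U, hU, ⟨_, hb'U, hb'⟩, hUsub⟩ := hb.2 ε hε
  obtain ⟨φ, hφ, ⟨a', ha', rfl⟩, hφball⟩ := hpull _ hb'
  refine ⟨φ ⁻¹' U, @IsOpen.preimage _ _ (weakTop A) (weakTop B) _ hφ _ hU, ⟨a', hb'U, ha'⟩, ?_⟩
  rintro a'' ⟨ha''U, ha''⟩
  exact (hφball a'' ha'').2.trans (hUsub ⟨ha''U, (hφball a'' ha'').1⟩)

end Weak

theorem WithLp.prod_norm_le_iff {X Y : Type*} [Norm X] [Norm Y] (z : WithLp ⊤ (X × Y)) (r : ℝ) :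
    ‖z‖ ≤ r ↔ ‖z.fst‖ ≤ r ∧ ‖z.snd‖ ≤ r := by
  rw [WithLp.prod_norm_eq_sup, sup_le_iff]

section Prod

open WithLp

variable {X Y : Type*} [NormedAddCommGroup X] [NormedSpace ℝ X]
  [NormedAddCommGroup Y] [NormedSpace ℝ Y] {x : X} {y : Y}

theorem IsSemiPCOfBall.of_toLp_fst (h : IsSemiPCOfBall (toLp ⊤ (x, y))) : IsSemiPCOfBall x := by
  refine h.of_pullback ((prod_norm_le_iff _ _).1 h.1).1 fun z hz => ?_
  rw [prod_norm_le_iff] at hz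
  refine ⟨fun x' => toLp ⊤ (x', z.snd), continuous_weakTop_toLp_mk_left ⊤ z.snd,
    ⟨z.fst, hz.1, rfl⟩, fun x' hx' => ⟨(prod_norm_le_iff _ _).2 ⟨hx', hz.2⟩, ?_⟩⟩
  rw [prod_dist_eq_sup]
  exact le_sup_left

theorem IsSemiPCOfBall.of_toLp_snd (h : IsSemiPCOfBall (toLp ⊤ (x, y))) : IsSemiPCOfBall y := by
  refine h.of_pullback ((prod_norm_le_iff _ _).1 h.1).2 fun z hz => ?_
  rw [prod_norm_le_iff] at hz
  refine ⟨fun y' => toLp ⊤ (z.fst, y'), continuous_weakTop_toLp_mk_right ⊤ z.fst,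
    ⟨z.snd, hz.2, rfl⟩, fun y' hy' => ⟨(prod_norm_le_iff _ _).2 ⟨hz.1, hy'⟩, ?_⟩⟩
  rw [prod_dist_eq_sup]
  exact le_sup_right

theorem IsSemiPCOfBall.toLp_prod (hx : IsSemiPCOfBall x) (hy : IsSemiPCOfBall y) :
    IsSemiPCOfBall (toLp ⊤ (x, y)) := by
  refine ⟨(prod_norm_le_iff _ _).2 ⟨hx.1, hy.1⟩, fun ε hε => ?_⟩
  obtain ⟨U, hU, ⟨a, haU, ha⟩, hUsub⟩ := hx.2 ε hε
  obtain ⟨V, hV, ⟨b, hbV, hb⟩, hVsub⟩ := hy.2 ε hε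
  refine ⟨WithLp.fst ⁻¹' U ∩ WithLp.snd ⁻¹' V,
    @IsOpen.inter _ (weakTop _) _ _
      (@IsOpen.preimage _ _ (weakTop _) (weakTop X) _ (continuous_weakTop_withLp_fst ⊤) _ hU)
      (@IsOpen.preimage _ _ (weakTop _) (weakTop Y) _ (continuous_weakTop_withLp_snd ⊤) _ hV),
    ⟨toLp ⊤ (a, b), ⟨haU, hbV⟩, (prod_norm_le_iff _ _).2 ⟨ha, hb⟩⟩, ?_⟩
  rintro z ⟨⟨hzU, hzV⟩, hz⟩
  replace hz := (prod_norm_le_iff z 1).1 hz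
  rw [Metric.mem_closedBall, prod_dist_eq_sup]
  exact sup_le (hUsub ⟨hzU, hz.1⟩) (hVsub ⟨hzV, hz.2⟩)

end Prod

theorem isSemiPCOfBall_prod_top_iff_general
    {X Y : Type*} [NormedAddCommGroup X] [NormedSpace ℝ X]
    [NormedAddCommGroup Y] [NormedSpace ℝ Y] (x : X) (y : Y) :
    IsSemiPCOfBall ((WithLp.equiv ⊤ (X × Y)).symm (x, y)) ↔
      IsSemiPCOfBall x ∧ IsSemiPCOfBall y :=
  ⟨fun h => ⟨h.of_toLp_fst, h.of_toLp_snd⟩, fun h => h.1.toLp_prod h.2⟩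

/-- For Banach spaces `X`, `Y` and `Z = X ⊕_∞ Y` (max norm), `(x, y)` is a semi PC point of
`B_Z` iff `x` is a semi PC point of `B_X` and `y` is a semi PC point of `B_Y`. -/
theorem isSemiPCOfBall_prod_top_iff
    {X Y : Type*} [NormedAddCommGroup X] [NormedSpace ℝ X] [CompleteSpace X]
    [NormedAddCommGroup Y] [NormedSpace ℝ Y] [CompleteSpace Y] (x : X) (y : Y) :
    IsSemiPCOfBall ((WithLp.equiv ⊤ (X × Y)).symm (x, y)) ↔
      IsSemiPCOfBall x ∧ IsSemiPCOfBall y :=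
  isSemiPCOfBall_prod_top_iff_general x y
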